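/- arXiv:1606.07525 — 6 statements merged into one kernel-verified Lean document; each statement's English description precedes it below -/
import Mathlib

section
/- The Knowledge of Preconditions Theorem: Let R be a system, i an agent, and does_i a conscious action for i in R. If the fact ψ is a necessary condition for does_i in R, then the fact K_i ψ is also a necessary condition for does_i in R; that is, for every point (r,t) of R, if does_i r t holds then (K i ψ) r t holds. -/
/-- Agent `i`'s knowledge operator in system `R` with local-state map `loc`. -/
def K {Agent LState Run : Type*} (R : Set Run) (loc : Run → ℕ → Agent → LState)
    (i : Agent) (φ : Run → ℕ → Prop) : Run → ℕ → Prop :=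
  fun r t => ∀ r' ∈ R, ∀ t' : ℕ, loc r' t' i = loc r t i → φ r' t'

/-- `ψ` is a necessary condition for the action `does` in system `R`. -/
def NecessaryFor {Run : Type*} (R : Set Run) (ψ does : Run → ℕ → Prop) : Prop :=
  ∀ r ∈ R, ∀ t : ℕ, does r t → ψ r t

/-- `does` is a conscious action for agent `i` in system `R`. -/
def Conscious {Agent LState Run : Type*} (R : Set Run) (loc : Run → ℕ → Agent → LState)
    (i : Agent) (does : Run → ℕ → Prop) : Prop :=
  ∀ r ∈ R, ∀ r' ∈ R, ∀ t t' : ℕ, loc r t i = loc r' t' i → (does r t ↔ does r' t')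

/-- The Knowledge of Preconditions Theorem. -/
theorem knowledge_of_preconditions {Agent LState Run : Type*}
    (R : Set Run) (loc : Run → ℕ → Agent → LState) (i : Agent)
    (does ψ : Run → ℕ → Prop)
    (hconscious : Conscious R loc i does)
    (hnec : NecessaryFor R ψ does) :
    NecessaryFor R (K R loc i ψ) does := by
  intro r hr t hd r' hr' t' hloc
  exact hnec r' hr' t' ((hconscious r hr r' hr' t t' hloc.symm).mp hd)
end

section
/- The Common Knowledge of Preconditions Theorem: Let G be a set of agents and, for each i ∈ G, let does_i be an action for agent i such that the family {does_i}_{i∈G} is necessarily simultaneous in the system R (for all i,j ∈ G, does_i is a necessary condition for does_j in R) and each does_i is a conscious action for i in R. If the fact ψ is a necessary condition for does_i in R for some i ∈ G, then ψ is common knowledge to G whenever any of the actions is performed: for every j ∈ G, every m ≥ 1, every sequence i_1, i_2, ..., i_m of agents from G, the nested-knowledge fact K_{i_1}(K_{i_2}(··· K_{i_m} ψ ···)) is a necessary condition for does_j in R. -/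
/-- The nested-knowledge fact `K_{i₁} K_{i₂} ⋯ K_{iₘ} ψ` for a list `[i₁,…,iₘ]`. -/
def Knest {Agent LState Run : Type*} (R : Set Run) (loc : Run → ℕ → Agent → LState)
    (l : List Agent) (ψ : Run → ℕ → Prop) : Run → ℕ → Prop :=
  l.foldr (fun i φ => K R loc i φ) ψ

/-!
Since the actions are simultaneous, a precondition of one of them is a precondition of all of
them. An agent performing a conscious action performs it at every point it cannot distinguish
from the current one, so every precondition of a conscious action of `i` is known to `i`
whenever the action is performed. Peeling off one knowledge operator at a time, induction on
the list of agents gives all nested-knowledge facts.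
-/

section

variable {Agent LState Run : Type*} {R : Set Run} {loc : Run → ℕ → Agent → LState}

theorem NecessaryFor.trans {ψ φ does : Run → ℕ → Prop} (hψ : NecessaryFor R ψ φ)
    (hφ : NecessaryFor R φ does) : NecessaryFor R ψ does :=
  fun r hr t hd => hψ r hr t (hφ r hr t hd)

theorem Conscious.necessaryFor_K {i : Agent} {φ does : Run → ℕ → Prop}
    (hc : Conscious R loc i does) (hφ : NecessaryFor R φ does) :
    NecessaryFor R (K R loc i φ) does :=
  fun r hr t hd r' hr' t' hloc => hφ r' hr' t' ((hc r hr r' hr' t t' hloc.symm).mp hd)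

theorem necessaryFor_Knest {G : Set Agent} {does : Agent → Run → ℕ → Prop}
    {ψ : Run → ℕ → Prop} (hsimul : ∀ i ∈ G, ∀ j ∈ G, NecessaryFor R (does i) (does j))
    (hconscious : ∀ i ∈ G, Conscious R loc i (does i))
    (hψ : ∀ j ∈ G, NecessaryFor R ψ (does j)) :
    ∀ l : List Agent, (∀ a ∈ l, a ∈ G) → ∀ j ∈ G, NecessaryFor R (Knest R loc l ψ) (does j)
  | [], _ => hψ
  | a :: l, hl => fun j hj =>
    have ha : a ∈ G := hl a List.mem_cons_self
    have ih := necessaryFor_Knest hsimul hconscious hψ l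
      (fun b hb => hl b (List.mem_cons_of_mem a hb)) a ha
    ((hconscious a ha).necessaryFor_K ih).trans (hsimul a ha j hj)

end

/-- The Common Knowledge of Preconditions Theorem. -/
theorem common_knowledge_of_preconditions {Agent LState Run : Type*}
    (R : Set Run) (loc : Run → ℕ → Agent → LState)
    (G : Set Agent) (does : Agent → Run → ℕ → Prop) (ψ : Run → ℕ → Prop)
    (hsimul : ∀ i ∈ G, ∀ j ∈ G, NecessaryFor R (does i) (does j))
    (hconscious : ∀ i ∈ G, Conscious R loc i (does i))
    (hnec : ∃ i ∈ G, NecessaryFor R ψ (does i)) :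
    ∀ j ∈ G, ∀ l : List Agent, l ≠ [] → (∀ a ∈ l, a ∈ G) →
      NecessaryFor R (Knest R loc l ψ) (does j) := by
  obtain ⟨i, hiG, hi⟩ := hnec
  have hψ : ∀ j ∈ G, NecessaryFor R ψ (does j) := fun j hj => hi.trans (hsimul i hiG j hj)
  intro j hj l _ hl
  exact necessaryFor_Knest hsimul hconscious hψ l hl j hj
end

section
/- Let does_j be a conscious action for agent j in the system R, and suppose agent j recalls did_j in R (i.e., the fact K_j did_j is stable in R). Then did_j is a j-local fact in R: for every point (r,t) of R, did_j r t implies (K j did_j) r t. -/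
/-- `did does r t` holds iff the action `does` was performed at some time `t' ≤ t` in run `r`. -/
def did {Run : Type*} (does : Run → ℕ → Prop) : Run → ℕ → Prop :=
  fun r t => ∃ t' ≤ t, does r t'

/-- `φ` is stable in `R`: once true, it remains true. -/
def Stable {Run : Type*} (R : Set Run) (φ : Run → ℕ → Prop) : Prop :=
  ∀ r ∈ R, ∀ t t' : ℕ, t ≤ t' → φ r t → φ r t'

/-- If `does_j` is conscious for `j` and agent `j` recalls `did_j`, then `did_j`
is a `j`-local fact in `R`. -/
theorem did_is_local {Agent LState Run : Type*}
    (R : Set Run) (loc : Run → ℕ → Agent → LState) (j : Agent)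
    (does_j : Run → ℕ → Prop)
    (hconscious : Conscious R loc j does_j)
    (hrecall : Stable R (K R loc j (did does_j))) :
    ∀ r ∈ R, ∀ t : ℕ, did does_j r t → K R loc j (did does_j) r t := by
  rintro r hr t ⟨t0, ht0, hdoes⟩
  refine hrecall r hr t0 t ht0 ?_
  intro r' hr' t' hloc
  exact ⟨t', le_rfl, (hconscious r hr r' hr' t0 t' hloc.symm).mp hdoes⟩
end

section
/- Nested Knowledge of Preconditions Theorem (ordering and nested knowledge): Let does_1, ..., does_k be actions for agents 1, ..., k such that (i) the sequence is ordered in R (for each 2 ≤ j ≤ k, did_{j-1} is a necessary condition for does_j in R), (ii) each agent j recalls did_j in R, (iii) each does_j is a conscious action for j in R, and (iv) ψ is a stable fact in R that is a necessary condition for does_1 in R. Then for every j ≤ k, the nested-knowledge fact K_j(K_{j-1}(··· K_1 ψ ···)) is a necessary condition for does_j in R. -/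
/-- The nested-knowledge fact `K_j K_{j-1} ⋯ K_1 ψ`, where the agents are
named by the natural numbers `j, j-1, …, 1`. -/
def KnestDown {LState Run : Type*} (R : Set Run) (loc : Run → ℕ → ℕ → LState) :
    ℕ → (Run → ℕ → Prop) → (Run → ℕ → Prop)
  | 0, ψ => ψ
  | n + 1, ψ => K R loc (n + 1) (KnestDown R loc n ψ)

/-- Nested Knowledge of Preconditions Theorem: in an ordered sequence of
conscious actions by agents with recall, `K_j K_{j-1} ⋯ K_1 ψ` is a necessary
condition for the `j`-th action, for every stable necessary condition `ψ` of
the first action. -/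
theorem nested_knowledge_of_preconditions {LState Run : Type*}
    (R : Set Run) (loc : Run → ℕ → ℕ → LState) (k : ℕ)
    (does : ℕ → Run → ℕ → Prop) (ψ : Run → ℕ → Prop)
    (hord : ∀ j : ℕ, 2 ≤ j → j ≤ k → NecessaryFor R (did (does (j - 1))) (does j))
    (hrecall : ∀ j : ℕ, 1 ≤ j → j ≤ k → Stable R (K R loc j (did (does j))))
    (hconscious : ∀ j : ℕ, 1 ≤ j → j ≤ k → Conscious R loc j (does j))
    (hstable : Stable R ψ)
    (hnec : NecessaryFor R ψ (does 1)) :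
    ∀ j : ℕ, 1 ≤ j → j ≤ k → NecessaryFor R (KnestDown R loc j ψ) (does j) := by

  have key : ∀ j : ℕ, 1 ≤ j → j ≤ k → ∀ r ∈ R, ∀ t, did (does j) r t →
      KnestDown R loc j ψ r t := by
    intro j
    induction j with
    | zero => omega
    | succ n ih =>
      intro _ hjk r hr t hdid
      obtain ⟨t₀, ht₀, hdoes⟩ := hdid
      have hK : K R loc (n+1) (did (does (n+1))) r t₀ := by
        intro r' hr' t' hl
        exact ⟨t', le_refl _,
          (hconscious (n+1) (by omega) hjk r hr r' hr' t₀ t' hl.symm).1 hdoes⟩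
      have hKt : K R loc (n+1) (did (does (n+1))) r t :=
        hrecall (n+1) (by omega) hjk r hr t₀ t ht₀ hK
      show K R loc (n+1) (KnestDown R loc n ψ) r t
      intro r' hr' t' hl
      obtain ⟨s₀, hs₀, hd⟩ := hKt r' hr' t' hl
      cases n with
      | zero =>
        exact hstable r' hr' s₀ t' hs₀ (hnec r' hr' s₀ hd)
      | succ m =>
        obtain ⟨u, hu, hdu⟩ := hord (m+2) (by omega) hjk r' hr' s₀ hd
        exact ih (by omega) (by omega) r' hr' t' ⟨u, le_trans hu hs₀, hdu⟩
  intro j h1 hjk r hr t hd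
  exact key j h1 hjk r hr t ⟨t, le_refl t, hd⟩
end

section
/- Base case of the Nested Knowledge of Preconditions Theorem: Let does_1 be an action for agent 1 that is a conscious action for 1 in R, suppose agent 1 recalls did_1 in R, and let ψ be a stable fact in R that is a necessary condition for does_1 in R. Then for every point (r,t) of R, did_1 r t implies (K 1 ψ) r t; in particular K_1 ψ is a necessary condition for does_1 in R. -/
/-- Base case of the Nested Knowledge of Preconditions Theorem: `did_1` validly
implies `K_1 ψ`, and in particular `K_1 ψ` is a necessary condition for `does_1`. -/
theorem nested_knowledge_base_case {Agent LState Run : Type*}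
    (R : Set Run) (loc : Run → ℕ → Agent → LState) (a1 : Agent)
    (does_1 : Run → ℕ → Prop) (ψ : Run → ℕ → Prop)
    (hconscious : Conscious R loc a1 does_1)
    (hrecall : Stable R (K R loc a1 (did does_1)))
    (hstable : Stable R ψ)
    (hnec : NecessaryFor R ψ does_1) :
    (∀ r ∈ R, ∀ t : ℕ, did does_1 r t → K R loc a1 ψ r t) ∧
      NecessaryFor R (K R loc a1 ψ) does_1 := by
  have main : ∀ r ∈ R, ∀ t : ℕ, did does_1 r t → K R loc a1 ψ r t := by
    intro r hr t hdid
    obtain ⟨s, hs, hdoes⟩ := hdid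
    have hK : K R loc a1 (did does_1) r s := by
      intro r'' hr'' t'' hloc
      exact ⟨t'', le_refl _, (hconscious r hr r'' hr'' s t'' hloc.symm).mp hdoes⟩
    have hKt : K R loc a1 (did does_1) r t := hrecall r hr s t hs hK
    intro r' hr' t' hloc
    obtain ⟨s', hs', hdoes'⟩ := hKt r' hr' t' hloc
    exact hstable r' hr' s' t' hs' (hnec r' hr' s' hdoes')
  exact ⟨main, fun r hr t hdoes => main r hr t ⟨t, le_refl _, hdoes⟩⟩
end

section
/- Strengthened form of the Nested Knowledge of Preconditions Theorem: Let does_1, ..., does_k be actions for agents 1, ..., k such that (i) the sequence is ordered in R (for each 2 ≤ j ≤ k, did_{j-1} is a necessary condition for does_j in R), (ii) each agent j recalls did_j in R, (iii) each does_j is a conscious action for j in R, and (iv) ψ is a stable fact in R that is a necessary condition for does_1 in R. Then for every j ≤ k and every point (r,t) of R, did_j r t implies that the nested-knowledge fact K_j(K_{j-1}(··· K_1 ψ ···)) holds at (r,t). -/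
/-- Strengthened Nested Knowledge of Preconditions Theorem: `did_j` validly
implies `K_j K_{j-1} ⋯ K_1 ψ` in `R`, for every `j ≤ k`. -/
theorem nested_knowledge_of_preconditions_strong {LState Run : Type*}
    (R : Set Run) (loc : Run → ℕ → ℕ → LState) (k : ℕ)
    (does : ℕ → Run → ℕ → Prop) (ψ : Run → ℕ → Prop)
    (hord : ∀ j : ℕ, 2 ≤ j → j ≤ k → NecessaryFor R (did (does (j - 1))) (does j))
    (hrecall : ∀ j : ℕ, 1 ≤ j → j ≤ k → Stable R (K R loc j (did (does j))))
    (hconscious : ∀ j : ℕ, 1 ≤ j → j ≤ k → Conscious R loc j (does j))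
    (hstable : Stable R ψ)
    (hnec : NecessaryFor R ψ (does 1)) :
    ∀ j : ℕ, 1 ≤ j → j ≤ k → ∀ r ∈ R, ∀ t : ℕ,
      did (does j) r t → KnestDown R loc j ψ r t := by
  intro j hj
  induction j, hj using Nat.le_induction with
  | base =>
    intro hk r hr t hdid
    obtain ⟨t0, ht0, hdoes⟩ := hdid
    have hK0 : K R loc 1 (did (does 1)) r t0 := by
      intro r' hr' t' hloc
      exact ⟨t', le_refl _, (hconscious 1 le_rfl hk r hr r' hr' t0 t' hloc.symm).mp hdoes⟩
    have hKt : K R loc 1 (did (does 1)) r t :=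
      hrecall 1 le_rfl hk r hr t0 t ht0 hK0
    intro r' hr' t' hloc
    obtain ⟨s, hs, hds⟩ := hKt r' hr' t' hloc
    exact hstable r' hr' s t' hs (hnec r' hr' s hds)
  | succ n hn ih =>
    intro hk r hr t hdid
    obtain ⟨t0, ht0, hdoes⟩ := hdid
    have hnk : n ≤ k := le_trans (Nat.le_succ n) hk
    have hK0 : K R loc (n + 1) (did (does (n + 1))) r t0 := by
      intro r' hr' t' hloc
      exact ⟨t', le_refl _,
        (hconscious (n + 1) (by omega) hk r hr r' hr' t0 t' hloc.symm).mp hdoes⟩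
    have hKt := hrecall (n + 1) (by omega) hk r hr t0 t ht0 hK0
    intro r' hr' t' hloc
    obtain ⟨s, hs, hds⟩ := hKt r' hr' t' hloc
    have hdidn : did (does n) r' s := hord (n + 1) (by omega) hk r' hr' s hds
    obtain ⟨u, hu, hdu⟩ := hdidn
    exact ih hnk r' hr' t' ⟨u, hu.trans hs, hdu⟩
end
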